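/- For every positive integer k and every positive divisor d of k!, there exists a primitive polynomial f ∈ ℤ[x] of degree k such that gcd{f(a) : a ∈ ℤ} = d. -/

import Mathlib

/-!
The falling factorial `x (x - 1) ⋯ (x - k + 1)` is monic of degree `k`, vanishes at `0`, and all
its values are divisible by `k!` (they are `k! * (a choose k)`). Hence `x (x - 1) ⋯ (x - k + 1) + d`
is monic, so primitive, of degree `k`, every value is divisible by `d`, and its value at `0` is `d`.
-/

open Polynomial

theorem Ideal.span_range_eq_span_singleton_of_dvd {R ι : Type*} [CommSemiring R] {g : ι → R}
    {d : R} (hmem : d ∈ Set.range g) (hdvd : ∀ i, d ∣ g i) :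
    Ideal.span (Set.range g) = Ideal.span {d} := by
  apply le_antisymm
  · rw [Ideal.span_le]
    rintro _ ⟨i, rfl⟩
    exact Ideal.mem_span_singleton.mpr (hdvd i)
  · rw [Ideal.span_le, Set.singleton_subset_iff]
    exact Ideal.subset_span hmem

theorem factorial_dvd_eval_descPochhammer (k : ℕ) (a : ℤ) :
    (k.factorial : ℤ) ∣ (descPochhammer ℤ k).eval a := by
  rw [eval_eq_smeval, Ring.descPochhammer_eq_factorial_smul_choose, nsmul_eq_mul]
  exact dvd_mul_right _ _

section ShiftedDescPochhammer

variable {R : Type*} [Ring R] {k : ℕ}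

theorem degree_C_lt_degree_descPochhammer [IsDomain R] (hk : 0 < k) (d : R) :
    (C d).degree < (descPochhammer R k).degree := by
  rw [degree_eq_natDegree (monic_descPochhammer R k).ne_zero, descPochhammer_natDegree]
  exact degree_C_le.trans_lt (by exact_mod_cast hk)

theorem monic_descPochhammer_add_C [IsDomain R] (hk : 0 < k) (d : R) :
    (descPochhammer R k + C d).Monic :=
  (monic_descPochhammer R k).add_of_left (degree_C_lt_degree_descPochhammer hk d)

theorem natDegree_descPochhammer_add_C [IsDomain R] (hk : 0 < k) (d : R) :
    (descPochhammer R k + C d).natDegree = k := by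
  rw [natDegree_add_eq_left_of_degree_lt (degree_C_lt_degree_descPochhammer hk d),
    descPochhammer_natDegree]

theorem eval_zero_descPochhammer_add_C (hk : 0 < k) (d : R) :
    (descPochhammer R k + C d).eval 0 = d := by
  rw [eval_add, eval_C, descPochhammer_eval_zero, if_neg hk.ne', zero_add]

end ShiftedDescPochhammer

theorem dvd_eval_descPochhammer_add_C {k : ℕ} {d : ℤ} (hdvd : d ∣ k.factorial) (a : ℤ) :
    d ∣ (descPochhammer ℤ k + C d).eval a := by
  rw [eval_add, eval_C]
  exact dvd_add (hdvd.trans (factorial_dvd_eval_descPochhammer k a)) dvd_rfl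

theorem stmt_2_general (k : ℕ) (hk : 0 < k) (d : ℕ) (hdvd : d ∣ Nat.factorial k) :
    ∃ f : Polynomial ℤ, f.IsPrimitive ∧ f.natDegree = k ∧
      Ideal.span (Set.range fun a : ℤ => f.eval a) = Ideal.span {(d : ℤ)} := by
  refine ⟨descPochhammer ℤ k + C (d : ℤ), (monic_descPochhammer_add_C hk _).isPrimitive,
    natDegree_descPochhammer_add_C hk _, ?_⟩
  exact Ideal.span_range_eq_span_singleton_of_dvd ⟨0, eval_zero_descPochhammer_add_C hk _⟩
    (dvd_eval_descPochhammer_add_C (Int.natCast_dvd_natCast.mpr hdvd))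

theorem stmt_2 (k : ℕ) (hk : 0 < k) (d : ℕ) (hd : 0 < d) (hdvd : d ∣ Nat.factorial k) :
    ∃ f : Polynomial ℤ, f.IsPrimitive ∧ f.natDegree = k ∧
      Ideal.span (Set.range fun a : ℤ => f.eval a) = Ideal.span {(d : ℤ)} :=
  stmt_2_general k hk d hdvd
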